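/- Let f : H → G be a core-free virtual endomorphism of a group G and d ≥ 1. Then the map ḟ : H × G^{d-1} → G^d defined by ḟ(h₁, g₂, …, g_d) = (g₂, …, g_d, f(h₁)) is a core-free virtual endomorphism of G^d of index [G:H]. -/

import Mathlib

/-- `f : H → G` is a core-free virtual endomorphism. -/
def CoreFree {G : Type*} [Group G] (H : Subgroup G) (f : ↥H →* G) : Prop :=
  ∀ K : Subgroup G, K ≤ H → K.Normal → (∀ x : ↥H, (x : G) ∈ K → f x ∈ K) → K = ⊥

/-- The subgroup `H × G^{d-1}` of `G^d` (first coordinate in `H`). -/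
def firstInH {G : Type*} [Group G] (H : Subgroup G) (d : ℕ) [NeZero d] :
    Subgroup (Fin d → G) :=
  Subgroup.pi Set.univ (fun i => if i = 0 then H else ⊤)

/-- The economical virtual endomorphism
`ḟ(h₁, g₂, …, g_d) = (g₂, …, g_d, f(h₁))` of `G^d`. -/
def cycleVE {G : Type*} [Group G] (H : Subgroup G) (f : ↥H →* G) (d : ℕ) [NeZero d] :
    ↥(firstInH H d) →* (Fin d → G) :=
  MonoidHom.mk'
    (fun x i =>
      if h : (i : ℕ) + 1 < d then (x : Fin d → G) ⟨(i : ℕ) + 1, h⟩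
      else f ⟨(x : Fin d → G) 0, by simpa using x.2 0 (Set.mem_univ 0)⟩)
    (by
      intro a b
      funext i
      by_cases h : (i : ℕ) + 1 < d <;> simp [h, ← map_mul] <;> rfl)

/-!
Let `K ≤ H × G^{d-1}` be normal in `G^d` and `ḟ`-invariant, and let `K_j` be its image under the
`j`-th coordinate projection, a normal subgroup of `G`. Since `ḟ` shifts coordinates to the left,
`K_{j+1} ≤ K_j`, so every `K_j` lies in `K_0 ≤ H`. The last coordinate of `ḟ x` is `f (x 0)`,
hence `f K_0 ≤ K_{d-1} ≤ K_0`, and core-freeness of `f` forces `K_0 = 1`; then every coordinate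
of `K` is trivial. The index is that of the first factor, the others being all of `G`.
-/

section CycleVE

variable {G : Type*} [Group G] {H : Subgroup G}

lemma mem_of_mem_firstInH {d : ℕ} [NeZero d] {x : Fin d → G} (hx : x ∈ firstInH H d) :
    x 0 ∈ H := by
  simpa [firstInH] using hx 0 (Set.mem_univ 0)

lemma index_firstInH (d : ℕ) [NeZero d] :
    (firstInH H d).index = H.index := by
  rw [firstInH, Subgroup.index_pi, Fintype.prod_eq_single 0 fun i hi => by simp [hi]]
  simp

lemma map_eval_zero_le {d : ℕ} [NeZero d] {K : Subgroup (Fin d → G)} (hK : K ≤ firstInH H d) :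
    K.map (Pi.evalMonoidHom _ 0) ≤ H := by
  rintro _ ⟨x, hx, rfl⟩
  exact mem_of_mem_firstInH (hK hx)

variable {f : H →* G} {n : ℕ} [NeZero (n + 1)]

lemma cycleVE_apply_castSucc (x : firstInH H (n + 1)) (i : Fin n) :
    cycleVE H f (n + 1) x i.castSucc = (x : Fin (n + 1) → G) i.succ :=
  dif_pos (Nat.succ_lt_succ i.is_lt)

lemma cycleVE_apply_last (x : firstInH H (n + 1)) :
    cycleVE H f (n + 1) x (Fin.last n) = f ⟨(x : Fin (n + 1) → G) 0, mem_of_mem_firstInH x.2⟩ :=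
  dif_neg (lt_irrefl _)

lemma map_eval_succ_le {K : Subgroup (Fin (n + 1) → G)} (hK : K ≤ firstInH H (n + 1))
    (hKf : ∀ x : firstInH H (n + 1), (x : Fin (n + 1) → G) ∈ K → cycleVE H f (n + 1) x ∈ K)
    (i : Fin n) :
    K.map (Pi.evalMonoidHom _ i.succ) ≤ K.map (Pi.evalMonoidHom _ i.castSucc) := by
  rintro _ ⟨x, hx, rfl⟩
  exact ⟨_, hKf ⟨x, hK hx⟩ hx, cycleVE_apply_castSucc _ i⟩

lemma map_eval_le_map_eval_zero {K : Subgroup (Fin (n + 1) → G)} (hK : K ≤ firstInH H (n + 1))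
    (hKf : ∀ x : firstInH H (n + 1), (x : Fin (n + 1) → G) ∈ K → cycleVE H f (n + 1) x ∈ K)
    (j : Fin (n + 1)) :
    K.map (Pi.evalMonoidHom _ j) ≤ K.map (Pi.evalMonoidHom _ 0) :=
  Fin.induction le_rfl (fun i ih => (map_eval_succ_le hK hKf i).trans ih) j

lemma map_eval_zero_invariant {K : Subgroup (Fin (n + 1) → G)} (hK : K ≤ firstInH H (n + 1))
    (hKf : ∀ x : firstInH H (n + 1), (x : Fin (n + 1) → G) ∈ K → cycleVE H f (n + 1) x ∈ K)
    (y : H) (hy : (y : G) ∈ K.map (Pi.evalMonoidHom _ 0)) :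
    f y ∈ K.map (Pi.evalMonoidHom _ 0) := by
  obtain ⟨x, hx, hxy⟩ := hy
  obtain rfl : y = ⟨x 0, mem_of_mem_firstInH (hK hx)⟩ := Subtype.ext hxy.symm
  exact map_eval_le_map_eval_zero hK hKf (Fin.last n)
    ⟨_, hKf ⟨x, hK hx⟩ hx, cycleVE_apply_last _⟩

theorem coreFree_cycleVE {d : ℕ} [NeZero d] (hf : CoreFree H f) :
    CoreFree (firstInH H d) (cycleVE H f d) := by
  obtain ⟨n, rfl⟩ := Nat.exists_eq_succ_of_ne_zero (NeZero.ne d)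
  intro K hK hKn hKf
  have hK0 : K.map (Pi.evalMonoidHom _ 0) = ⊥ :=
    hf _ (map_eval_zero_le hK) (hKn.map _ (Function.surjective_eval 0))
      (map_eval_zero_invariant hK hKf)
  refine (Subgroup.eq_bot_iff_forall K).2 fun x hx => funext fun j => ?_
  have := map_eval_le_map_eval_zero hK hKf j ⟨x, hx, rfl⟩
  rwa [hK0, Subgroup.mem_bot] at this

end CycleVE

theorem cycleVE_coreFree_general {G : Type*} [Group G] (H : Subgroup G)
    (f : ↥H →* G) (d : ℕ) [NeZero d] (hf : CoreFree H f) :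
    CoreFree (firstInH H d) (cycleVE H f d) ∧ (firstInH H d).index = H.index :=
  ⟨coreFree_cycleVE hf, index_firstInH d⟩

/-- if `f : H → G` is core-free of finite index, then `ḟ` is a core-free
virtual endomorphism of `G^d` of index `[G : H]`. -/
theorem cycleVE_coreFree {G : Type*} [Group G] (H : Subgroup G) [H.FiniteIndex]
    (f : ↥H →* G) (d : ℕ) [NeZero d] (hf : CoreFree H f) :
    CoreFree (firstInH H d) (cycleVE H f d) ∧ (firstInH H d).index = H.index :=
  cycleVE_coreFree_general H f d hf
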